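/- Assume (G), (L) and (M), and suppose there exists r1 > 0 with M(r1,L) > R0. Then the lower order of L, λ_L = liminf_{r→∞} (m−1)·(log log M(r,L))/(log r), satisfies (log d − log K)/(log 2) ≤ λ_L ≤ (log d + log K)/(log 2). -/
import Mathlib

open Filter Real

noncomputable def maxMod {m : ℕ} (g : EuclideanSpace ℝ (Fin m) → EuclideanSpace ℝ (Fin m))
    (r : ℝ) : ℝ :=
  sSup ((fun x => ‖g x‖) '' {x : EuclideanSpace ℝ (Fin m) | ‖x‖ = r})

lemma tend_aux (c1 c2 c3 c4 : ℝ) (h3 : 0 < c3) :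
    Tendsto (fun n : ℕ => (c1 * n + c2) / (c3 * n + c4)) atTop (nhds (c1 / c3)) := by
  have h0 : Tendsto (fun n : ℕ => (c1 + c2 / n) / (c3 + c4 / n)) atTop (nhds (c1 / c3)) := by
    have hnum : Tendsto (fun n : ℕ => c1 + c2 / n) atTop (nhds c1) := by
      simpa using tendsto_const_nhds.add (tendsto_const_div_atTop_nhds_zero_nat c2)
    have hden : Tendsto (fun n : ℕ => c3 + c4 / n) atTop (nhds c3) := by
      simpa using tendsto_const_nhds.add (tendsto_const_div_atTop_nhds_zero_nat c4)
    exact hnum.div hden (ne_of_gt h3)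
  refine h0.congr' ?_
  filter_upwards [eventually_ge_atTop 1] with n hn
  have hn0 : (n : ℝ) ≠ 0 := by positivity
  field_simp

lemma maxMod_spec {m : ℕ} (hm : 1 ≤ m) (L : EuclideanSpace ℝ (Fin m) → EuclideanSpace ℝ (Fin m))
    (hL : Continuous L) (r : ℝ) (hr : 0 ≤ r) :
    (∃ x, ‖x‖ = r ∧ ‖L x‖ = maxMod L r) ∧
      ∀ x : EuclideanSpace ℝ (Fin m), ‖x‖ = r → ‖L x‖ ≤ maxMod L r := by
  have : Nonempty (Fin m) := ⟨⟨0, by omega⟩⟩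
  have hsph : {x : EuclideanSpace ℝ (Fin m) | ‖x‖ = r} = Metric.sphere 0 r := by
    ext x; simp [Metric.mem_sphere, dist_zero_right]
  have hcpt : IsCompact {x : EuclideanSpace ℝ (Fin m) | ‖x‖ = r} := by
    rw [hsph]; exact isCompact_sphere 0 r
  have hne : {x : EuclideanSpace ℝ (Fin m) | ‖x‖ = r}.Nonempty := by
    refine ⟨r • EuclideanSpace.single (Classical.arbitrary (Fin m)) (1 : ℝ), ?_⟩
    simp [norm_smul, abs_of_nonneg hr]
  have himg : IsCompact ((fun x => ‖L x‖) '' {x : EuclideanSpace ℝ (Fin m) | ‖x‖ = r}) :=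
    hcpt.image (continuous_norm.comp hL)
  have hmem : maxMod L r ∈ (fun x => ‖L x‖) '' {x : EuclideanSpace ℝ (Fin m) | ‖x‖ = r} :=
    himg.sSup_mem (hne.image _)
  obtain ⟨x, hx, hx2⟩ := hmem
  exact ⟨⟨x, hx, hx2⟩, fun y hy => le_csSup himg.bddAbove ⟨y, hy, rfl⟩⟩

/-- Theorem 1.4 (lower order part): the lower order
`λ_L = liminf_{r→∞} (m−1)·log log M(r,L) / log r` of a Poincaré linearizer satisfies
`(log d − log K)/log 2 ≤ λ_L ≤ (log d + log K)/log 2`. -/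
theorem lower_order_of_linearizer {m : ℕ} (hm : 2 ≤ m) (d K : ℝ) (hK : 1 ≤ K) (hdK : K < d)
    (a b : ℝ) (ha : a = (d / K) ^ ((1 : ℝ) / ((m : ℝ) - 1)))
    (hb : b = (d * K) ^ ((1 : ℝ) / ((m : ℝ) - 1)))
    (R0 C1 C2 : ℝ) (hR0 : 1 ≤ R0) (hC1 : 0 < C1) (hC2 : 1 ≤ C2)
    (hbig : 1 < C1 * R0 ^ (a - 1))
    (f L : EuclideanSpace ℝ (Fin m) → EuclideanSpace ℝ (Fin m))
    (hlow : ∀ y : EuclideanSpace ℝ (Fin m), R0 < ‖y‖ → C1 * ‖y‖ ^ a ≤ ‖f y‖)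
    (hup : ∀ y : EuclideanSpace ℝ (Fin m), ‖f y‖ ≤ C2 * (max ‖y‖ R0) ^ b)
    (hLcont : Continuous L)
    (hfunc : ∀ x : EuclideanSpace ℝ (Fin m), f (L x) = L ((2 : ℝ) • x))
    (hmono : ∀ r s : ℝ, 0 < r → r ≤ s → maxMod L r ≤ maxMod L s)
    (r1 : ℝ) (hr1 : 0 < r1) (hMr1 : R0 < maxMod L r1) :
    (Real.log d - Real.log K) / Real.log 2 ≤
      Filter.liminf
        (fun r : ℝ => ((m : ℝ) - 1) * Real.log (Real.log (maxMod L r)) / Real.log r)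
        Filter.atTop ∧
    Filter.liminf
        (fun r : ℝ => ((m : ℝ) - 1) * Real.log (Real.log (maxMod L r)) / Real.log r)
        Filter.atTop ≤ (Real.log d + Real.log K) / Real.log 2 := by
  have hm2 : (2:ℝ) ≤ (m:ℝ) := by exact_mod_cast hm
  have hm1 : (0:ℝ) < (m:ℝ) - 1 := by linarith
  have hK0 : (0:ℝ) < K := lt_of_lt_of_le one_pos hK
  have hd0 : 0 < d := lt_trans hK0 hdK
  have hd1 : 1 < d := lt_of_le_of_lt hK hdK
  have ha1 : 1 < a := by
    rw [ha, Real.one_lt_rpow_iff_of_pos (by positivity)]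
    exact Or.inl ⟨(one_lt_div hK0).mpr hdK, by positivity⟩
  have hb1 : 1 < b := by
    rw [hb, Real.one_lt_rpow_iff_of_pos (by positivity)]
    exact Or.inl ⟨by nlinarith, by positivity⟩
  have ha0 : 0 < a := lt_trans one_pos ha1
  have hb0 : 0 < b := lt_trans one_pos hb1
  set M : ℝ → ℝ := maxMod L with hMdef
  have hspec : ∀ r : ℝ, 0 ≤ r →
      (∃ x, ‖x‖ = r ∧ ‖L x‖ = M r) ∧
        ∀ x : EuclideanSpace ℝ (Fin m), ‖x‖ = r → ‖L x‖ ≤ M r :=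
    fun r hr => maxMod_spec (by omega) L hLcont r hr
  -- recursion steps
  have step_lo : ∀ r : ℝ, 0 < r → R0 < M r → C1 * (M r) ^ a ≤ M (2 * r) := by
    intro r hr hMr
    obtain ⟨⟨x, hx, hx2⟩, -⟩ := hspec r hr.le
    have h2x : ‖(2:ℝ) • x‖ = 2 * r := by
      rw [norm_smul, hx]; norm_num
    obtain ⟨-, hle⟩ := hspec (2*r) (by positivity)
    have h3 := hle ((2:ℝ) • x) h2x
    rw [← hfunc x] at h3
    calc C1 * M r ^ a = C1 * ‖L x‖ ^ a := by rw [hx2]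
      _ ≤ ‖f (L x)‖ := hlow _ (by rw [hx2]; exact hMr)
      _ ≤ M (2*r) := h3
  have step_hi : ∀ r : ℝ, 0 < r → M (2 * r) ≤ C2 * (max (M r) R0) ^ b := by
    intro r hr
    obtain ⟨⟨y, hy, hy2⟩, -⟩ := hspec (2*r) (by positivity)
    obtain ⟨-, hle⟩ := hspec r hr.le
    set x := (2:ℝ)⁻¹ • y with hxdef
    have hyx : (2:ℝ) • x = y := by rw [hxdef, smul_smul]; norm_num
    have hx : ‖x‖ = r := by
      rw [hxdef, norm_smul, hy, Real.norm_eq_abs, abs_of_pos (by norm_num : (0:ℝ) < 2⁻¹)]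
      ring
    have h1 : ‖L y‖ = ‖f (L x)‖ := by rw [← hyx, ← hfunc]
    rw [← hy2, h1]
    calc ‖f (L x)‖ ≤ C2 * (max ‖L x‖ R0) ^ b := hup _
      _ ≤ C2 * (max (M r) R0) ^ b := by
          refine mul_le_mul_of_nonneg_left ?_ (by linarith)
          exact Real.rpow_le_rpow (le_trans (by linarith) (le_max_right ‖L x‖ R0))
            (max_le_max (hle x hx) le_rfl) hb0.le
  -- monotonicity facts
  have hMge : ∀ r, r1 ≤ r → R0 < M r := fun r h => lt_of_lt_of_le hMr1 (hmono r1 r hr1 h)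
  -- dyadic sequence
  set rn : ℕ → ℝ := fun n => 2^n * r1 with hrn
  have hrn_pos : ∀ n, 0 < rn n := fun n => by positivity
  have hrn_ge : ∀ n, r1 ≤ rn n := by
    intro n
    have : (1:ℝ) ≤ 2^n := one_le_pow₀ (by norm_num)
    calc r1 = 1 * r1 := (one_mul r1).symm
      _ ≤ 2^n * r1 := mul_le_mul_of_nonneg_right this hr1.le
  have hrn_succ : ∀ n, rn (n+1) = 2 * rn n := by
    intro n; simp only [hrn]; rw [pow_succ]; ring
  have hMrn : ∀ n, R0 < M (rn n) := fun n => hMge _ (hrn_ge n)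
  have hMrn1 : ∀ n, 1 < M (rn n) := fun n => lt_of_le_of_lt hR0 (hMrn n)
  -- constants
  set Ca := Real.log C1 / (a - 1) with hCa
  set T0 := Real.log (M r1) + Ca with hT0
  set Cb := Real.log C2 / (b - 1) with hCb
  set S0 := Real.log (M r1) + Cb with hS0
  have hlogMr1 : Real.log R0 < Real.log (M r1) := by
    rcases eq_or_lt_of_le hR0 with h | h
    · rw [← h]; simp; exact Real.log_pos (by rw [← h] at hMr1; exact hMr1)
    · exact Real.log_lt_log (by linarith) hMr1
  have hCaR0 : -Real.log R0 < Ca := by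
    have h1 : 0 < Real.log (C1 * R0 ^ (a-1)) := Real.log_pos hbig
    rw [Real.log_mul (ne_of_gt hC1) (by positivity), Real.log_rpow (by linarith)] at h1
    rw [hCa, lt_div_iff₀ (by linarith : (0:ℝ) < a - 1)]
    nlinarith
  have hT0pos : 0 < T0 := by
    have h0 : 0 ≤ Real.log R0 := Real.log_nonneg hR0
    rw [hT0]; linarith
  have hCb0 : 0 ≤ Cb := div_nonneg (Real.log_nonneg hC2) (by linarith)
  have hS0pos : 0 < S0 := by
    have := Real.log_nonneg hR0
    rw [hS0]; linarith
  -- growth estimates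
  have grow_lo : ∀ n : ℕ, a ^ n * T0 ≤ Real.log (M (rn n)) + Ca := by
    intro n; induction n with
    | zero => simp [hrn, hT0]
    | succ n ih =>
      have hMn : R0 < M (rn n) := hMrn n
      have hMn0 : (0:ℝ) < M (rn n) := by linarith
      have h1 : C1 * (M (rn n)) ^ a ≤ M (rn (n+1)) := by
        rw [hrn_succ n]; exact step_lo _ (hrn_pos n) hMn
      have h2 : Real.log (C1 * M (rn n) ^ a) ≤ Real.log (M (rn (n+1))) :=
        Real.log_le_log (by positivity) h1
      rw [Real.log_mul (ne_of_gt hC1) (by positivity), Real.log_rpow hMn0] at h2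
      have ih' : a * (a^n * T0) ≤ a * (Real.log (M (rn n)) + Ca) :=
        mul_le_mul_of_nonneg_left ih ha0.le
      have hane : a - 1 ≠ 0 := ne_of_gt (by linarith)
      have hCaeq : a * Ca = Ca + Real.log C1 := by
        rw [hCa]; field_simp; ring
      calc a ^ (n+1) * T0 = a * (a^n * T0) := by rw [pow_succ]; ring
        _ ≤ a * (Real.log (M (rn n)) + Ca) := ih'
        _ = Real.log C1 + a * Real.log (M (rn n)) + Ca := by rw [mul_add, hCaeq]; ring
        _ ≤ Real.log (M (rn (n+1))) + Ca := by linarith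
  have grow_hi : ∀ n : ℕ, Real.log (M (rn n)) + Cb ≤ b ^ n * S0 := by
    intro n; induction n with
    | zero => simp [hrn, hS0]
    | succ n ih =>
      have hMn : R0 < M (rn n) := hMrn n
      have hMn0 : (0:ℝ) < M (rn n) := by linarith
      have h1 : M (rn (n+1)) ≤ C2 * (M (rn n)) ^ b := by
        rw [hrn_succ n]
        have := step_hi (rn n) (hrn_pos n)
        rwa [max_eq_left hMn.le] at this
      have h2 : Real.log (M (rn (n+1))) ≤ Real.log (C2 * M (rn n) ^ b) :=
        Real.log_le_log (by linarith [hMrn (n+1)]) h1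
      rw [Real.log_mul (by linarith) (by positivity), Real.log_rpow hMn0] at h2
      have ih' : b * (Real.log (M (rn n)) + Cb) ≤ b * (b^n * S0) :=
        mul_le_mul_of_nonneg_left ih hb0.le
      have hbne : b - 1 ≠ 0 := ne_of_gt (by linarith)
      have hCbeq : b * Cb = Cb + Real.log C2 := by
        rw [hCb]; field_simp; ring
      calc Real.log (M (rn (n+1))) + Cb ≤ Real.log C2 + b * Real.log (M (rn n)) + Cb := by
            linarith
        _ = b * (Real.log (M (rn n)) + Cb) := by rw [mul_add, hCbeq]; ring
        _ ≤ b * (b^n * S0) := ih'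
        _ = b^(n+1) * S0 := by rw [pow_succ]; ring
  -- dyadic localization
  have hfloor : ∀ r : ℝ, r1 ≤ r → ∀ N : ℕ, rn N ≤ r →
      ∃ n : ℕ, N ≤ n ∧ rn n ≤ r ∧ r < rn (n+1) := by
    intro r hr N hN
    have hrpos : 0 < r := lt_of_lt_of_le hr1 hr
    set t := Real.logb 2 (r / r1) with htdef
    have hdiv1 : 1 ≤ r / r1 := (one_le_div hr1).mpr hr
    have ht0 : 0 ≤ t := Real.logb_nonneg one_lt_two hdiv1
    have h2t : (2:ℝ) ^ t = r / r1 := Real.rpow_logb two_pos (by norm_num) (by positivity)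
    refine ⟨⌊t⌋₊, ?_, ?_, ?_⟩
    · apply Nat.le_floor
      rw [htdef, Real.le_logb_iff_rpow_le one_lt_two (by positivity)]
      rw [Real.rpow_natCast]
      rw [le_div_iff₀ hr1]
      exact hN
    · have h1 : (2:ℝ) ^ ((⌊t⌋₊ : ℝ)) ≤ 2 ^ t :=
        (Real.rpow_le_rpow_left_iff one_lt_two).mpr (Nat.floor_le ht0)
      rw [h2t, Real.rpow_natCast] at h1
      calc rn ⌊t⌋₊ = 2 ^ ⌊t⌋₊ * r1 := rfl
        _ ≤ (r / r1) * r1 := mul_le_mul_of_nonneg_right h1 hr1.le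
        _ = r := div_mul_cancel₀ r (ne_of_gt hr1)
    · have h1 : (2:ℝ) ^ t < 2 ^ ((⌊t⌋₊ : ℝ) + 1) :=
        (Real.rpow_lt_rpow_left_iff one_lt_two).mpr (Nat.lt_floor_add_one t)
      have h2 : (2:ℝ) ^ ((⌊t⌋₊ : ℝ) + 1) = 2 ^ (⌊t⌋₊ + 1) := by
        rw [← Real.rpow_natCast 2 (⌊t⌋₊ + 1)]
        congr 1
        push_cast
        ring
      rw [h2t, h2] at h1
      calc r = (r / r1) * r1 := (div_mul_cancel₀ r (ne_of_gt hr1)).symm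
        _ < 2 ^ (⌊t⌋₊ + 1) * r1 := mul_lt_mul_of_pos_right h1 hr1
  clear_value M rn Ca T0 Cb S0
  -- target function and limits
  set u : ℝ → ℝ := fun r => ((m:ℝ) - 1) * Real.log (Real.log (M r)) / Real.log r with hu
  set A := ((m:ℝ)-1) * Real.log a / Real.log 2 with hA
  set B := ((m:ℝ)-1) * Real.log b / Real.log 2 with hB
  have hlog2 : (0:ℝ) < Real.log 2 := Real.log_pos one_lt_two
  have hloga : 0 < Real.log a := Real.log_pos ha1
  have hlogb : 0 < Real.log b := Real.log_pos hb1
  set v : ℕ → ℝ := fun n =>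
    (((m:ℝ)-1) * Real.log a * n + ((m:ℝ)-1) * Real.log (T0/2)) /
      (Real.log 2 * n + (Real.log 2 + Real.log r1)) with hv
  have hvtend : Tendsto v atTop (nhds A) := by
    rw [hv, hA]; exact tend_aux _ _ _ _ hlog2
  set w : ℕ → ℝ := fun n =>
    (((m:ℝ)-1) * Real.log b * n + ((m:ℝ)-1) * Real.log S0) /
      (Real.log 2 * n + Real.log r1) with hw
  have hwtend : Tendsto w atTop (nhds B) := by
    rw [hw, hB]; exact tend_aux _ _ _ _ hlog2
  clear_value u A B v w
  have hrn_tend : Tendsto rn atTop atTop := by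
    rw [hrn]; exact (tendsto_pow_atTop_atTop_of_one_lt one_lt_two).atTop_mul_const hr1
  have hpow_a : Tendsto (fun n : ℕ => a ^ n * (T0/2)) atTop atTop :=
    (tendsto_pow_atTop_atTop_of_one_lt ha1).atTop_mul_const (by linarith)
  -- eventual lower bound
  have ev_lo : ∀ ε : ℝ, 0 < ε → ∀ᶠ r in atTop, A - ε ≤ u r := by
    intro ε hε
    have e1 : ∀ᶠ n : ℕ in atTop, Ca ≤ a ^ n * (T0/2) := hpow_a.eventually_ge_atTop Ca
    have e2 : ∀ᶠ n : ℕ in atTop, 0 ≤ (n:ℝ) * Real.log a + Real.log (T0/2) := by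
      have h : Tendsto (fun n : ℕ => (n:ℝ) * Real.log a + Real.log (T0/2)) atTop atTop :=
        tendsto_atTop_add_const_right atTop _ (tendsto_natCast_atTop_atTop.atTop_mul_const hloga)
      exact h.eventually_ge_atTop 0
    have e3 : ∀ᶠ n : ℕ in atTop, 0 < Real.log 2 * n + (Real.log 2 + Real.log r1) := by
      have h : Tendsto (fun n : ℕ => Real.log 2 * (n:ℝ) + (Real.log 2 + Real.log r1)) atTop atTop :=
        tendsto_atTop_add_const_right atTop _
          (tendsto_natCast_atTop_atTop.const_mul_atTop hlog2)
      exact h.eventually_gt_atTop 0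
    have e4 : ∀ᶠ n : ℕ in atTop, A - ε ≤ v n :=
      hvtend.eventually (eventually_ge_nhds (by linarith))
    have e5 : ∀ᶠ n : ℕ in atTop, 1 < rn n := hrn_tend.eventually_gt_atTop 1
    obtain ⟨N, hN⟩ := eventually_atTop.mp (e1.and (e2.and (e3.and (e4.and e5))))
    rw [eventually_atTop]
    refine ⟨rn N, fun r hrR => ?_⟩
    have hr1r : r1 ≤ r := le_trans (hrn_ge N) hrR
    obtain ⟨n, hNn, hlo, hhi⟩ := hfloor r hr1r N hrR
    obtain ⟨P1, P2, P3, P4, -⟩ := hN n hNn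
    have hrngt1 : 1 < rn N := (hN N le_rfl).2.2.2.2
    have hrgt1 : (1:ℝ) < r := lt_of_lt_of_le hrngt1 hrR
    have hlogr : 0 < Real.log r := Real.log_pos hrgt1
    have hMr : R0 < M r := hMge r hr1r
    have hMrn0 : 0 < M (rn n) := lt_trans (by linarith) (hMrn n)
    have l1 : Real.log (M (rn n)) ≤ Real.log (M r) :=
      Real.log_le_log hMrn0 (hmono _ _ (hrn_pos n) hlo)
    have l2 : a ^ n * (T0/2) ≤ Real.log (M r) := by
      have P1' : Ca ≤ a ^ n * (T0/2) := P1
      have hg := grow_lo n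
      have e : a^n * T0 - a^n * (T0/2) = a^n * (T0/2) := by ring
      linarith
    have l2' : 0 < a ^ n * (T0/2) := by positivity
    have l3 : (n:ℝ) * Real.log a + Real.log (T0/2) ≤ Real.log (Real.log (M r)) := by
      have h := Real.log_le_log l2' l2
      rwa [Real.log_mul (by positivity) (by positivity), Real.log_pow] at h
    have l4 : Real.log r ≤ Real.log 2 * n + (Real.log 2 + Real.log r1) := by
      have h := Real.log_le_log (by linarith : (0:ℝ) < r) hhi.le
      rw [hrn] at h
      simp only at h
      rw [Real.log_mul (by positivity) (ne_of_gt hr1), Real.log_pow] at h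
      push_cast at h
      linarith
    have num_nonneg : 0 ≤ ((m:ℝ)-1) * ((n:ℝ) * Real.log a + Real.log (T0/2)) :=
      mul_nonneg (by linarith) P2
    calc A - ε ≤ v n := P4
      _ = ((m:ℝ)-1) * ((n:ℝ) * Real.log a + Real.log (T0/2)) /
            (Real.log 2 * n + (Real.log 2 + Real.log r1)) := by
          rw [hv]; congr 1; ring
      _ ≤ ((m:ℝ)-1) * ((n:ℝ) * Real.log a + Real.log (T0/2)) / Real.log r :=
          div_le_div_of_nonneg_left num_nonneg hlogr l4
      _ ≤ ((m:ℝ)-1) * Real.log (Real.log (M r)) / Real.log r :=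
          (div_le_div_iff_of_pos_right hlogr).mpr (mul_le_mul_of_nonneg_left l3 (by linarith))
      _ = u r := by rw [hu]
  -- frequent upper bound
  have freq_hi : ∀ ε : ℝ, 0 < ε → ∃ᶠ r in atTop, u r ≤ B + ε := by
    intro ε hε
    rw [frequently_atTop]
    intro R
    have e1 : ∀ᶠ n : ℕ in atTop, w n ≤ B + ε :=
      hwtend.eventually (eventually_le_nhds (by linarith))
    have e2 : ∀ᶠ n : ℕ in atTop, 0 < Real.log 2 * n + Real.log r1 := by
      have h : Tendsto (fun n : ℕ => Real.log 2 * (n:ℝ) + Real.log r1) atTop atTop :=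
        tendsto_atTop_add_const_right atTop _
          (tendsto_natCast_atTop_atTop.const_mul_atTop hlog2)
      exact h.eventually_gt_atTop 0
    have e3 : ∀ᶠ n : ℕ in atTop, R ≤ rn n := hrn_tend.eventually_ge_atTop R
    obtain ⟨N, hN⟩ := eventually_atTop.mp (e1.and (e2.and e3))
    obtain ⟨Q1, Q2, Q3⟩ := hN N le_rfl
    refine ⟨rn N, Q3, ?_⟩
    have hMN1 : 1 < M (rn N) := hMrn1 N
    have hlogM : 0 < Real.log (M (rn N)) := Real.log_pos hMN1
    have l1 : Real.log (M (rn N)) ≤ b ^ N * S0 := by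
      have := grow_hi N; linarith
    have l2 : Real.log (Real.log (M (rn N))) ≤ (N:ℝ) * Real.log b + Real.log S0 := by
      have h := Real.log_le_log hlogM l1
      rwa [Real.log_mul (by positivity) (ne_of_gt hS0pos), Real.log_pow] at h
    have l3 : Real.log (rn N) = Real.log 2 * N + Real.log r1 := by
      rw [hrn]
      simp only
      rw [Real.log_mul (by positivity) (ne_of_gt hr1), Real.log_pow]
      push_cast; ring
    have hlogrn : 0 < Real.log (rn N) := by rw [l3]; exact Q2
    calc u (rn N) = ((m:ℝ)-1) * Real.log (Real.log (M (rn N))) / Real.log (rn N) := by rw [hu]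
      _ ≤ (((m:ℝ)-1) * ((N:ℝ) * Real.log b + Real.log S0)) / Real.log (rn N) :=
          (div_le_div_iff_of_pos_right hlogrn).mpr (mul_le_mul_of_nonneg_left l2 (by linarith))
      _ = w N := by rw [hw, l3]; congr 1; ring
      _ ≤ B + ε := Q1
  -- assembly
  have bdd : IsBoundedUnder (· ≥ ·) atTop u :=
    ⟨A - 1, eventually_map.mpr (ev_lo 1 one_pos)⟩
  have cobdd : IsCoboundedUnder (· ≥ ·) atTop u :=
    Filter.IsCoboundedUnder.of_frequently_le (freq_hi 1 one_pos)
  have hmne : ((m:ℝ) - 1) ≠ 0 := ne_of_gt hm1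
  have hAeq : (Real.log d - Real.log K) / Real.log 2 = A := by
    rw [hA, ha, Real.log_rpow (by positivity), Real.log_div (ne_of_gt hd0) (ne_of_gt hK0)]
    field_simp
  have hBeq : (Real.log d + Real.log K) / Real.log 2 = B := by
    rw [hB, hb, Real.log_rpow (by positivity), Real.log_mul (ne_of_gt hd0) (ne_of_gt hK0)]
    field_simp
  constructor
  · rw [hAeq]
    by_contra hcon
    push_neg at hcon
    obtain ⟨ε, hε, hlt⟩ : ∃ ε > 0, Filter.liminf u atTop < A - ε :=
      ⟨(A - Filter.liminf u atTop)/2, by linarith, by linarith⟩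
    exact absurd (le_liminf_of_le cobdd (ev_lo ε hε)) (not_le.mpr hlt)
  · rw [hBeq]
    by_contra hcon
    push_neg at hcon
    obtain ⟨ε, hε, hlt⟩ : ∃ ε > 0, B + ε < Filter.liminf u atTop :=
      ⟨(Filter.liminf u atTop - B)/2, by linarith, by linarith⟩
    exact absurd hlt (not_lt.mpr (liminf_le_of_frequently_le (freq_hi ε hε) bdd))
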